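/- (Gentle measurement lemma) Let ρ be a quantum state on a finite-dimensional Hilbert space and Π an orthogonal projection with Tr(Πρ) > 0. Then F(ρ, ΠρΠ / Tr(Πρ)) ≥ √(Tr(Πρ)). -/

import Mathlib

/-!
For σ = PρP the square root √σ lives on the range of P, so √σ ρ √σ = √σ σ √σ = σ² and
F(ρ, σ) = Tr σ = Tr(Pρ). Fidelity scales like √r in its second argument, so after normalising
σ by Tr(Pρ) the fidelity is exactly √Tr(Pρ).
-/

open Matrix
open scoped Kronecker ComplexOrder

noncomputable section

def mfun {n : Type*} [Fintype n] [DecidableEq n] (f : ℝ → ℝ) (A : Matrix n n ℂ) : Matrix n n ℂ :=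
  if h : A.IsHermitian then
    h.eigenvectorUnitary.1 * Matrix.diagonal (fun i => (f (h.eigenvalues i) : ℂ)) *
      (star h.eigenvectorUnitary.1)
  else 0

def psqrt {n : Type*} [Fintype n] [DecidableEq n] (A : Matrix n n ℂ) : Matrix n n ℂ :=
  mfun Real.sqrt A

def mlog {n : Type*} [Fintype n] [DecidableEq n] (A : Matrix n n ℂ) : Matrix n n ℂ :=
  mfun Real.log A

def traceNorm {n : Type*} [Fintype n] [DecidableEq n] (A : Matrix n n ℂ) : ℝ :=
  ((psqrt (Aᴴ * A)).trace).re

def fid {n : Type*} [Fintype n] [DecidableEq n] (ρ σ : Matrix n n ℂ) : ℝ :=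
  traceNorm (psqrt ρ * psqrt σ)

def vNEntropy {n : Type*} [Fintype n] [DecidableEq n] (A : Matrix n n ℂ) : ℝ :=
  - ((A * mlog A).trace).re

def relEnt {n : Type*} [Fintype n] [DecidableEq n] (ρ σ : Matrix n n ℂ) : ℝ :=
  ((ρ * mlog ρ).trace - (ρ * mlog σ).trace).re

open scoped MatrixOrder

section

variable {n : Type*} [Fintype n] [DecidableEq n]

lemma mfun_eq_cfc {A : Matrix n n ℂ} (hA : A.IsHermitian) (f : ℝ → ℝ) : mfun f A = cfc f A := by
  rw [mfun, dif_pos hA, hA.cfc_eq]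
  rfl

lemma psqrt_eq_cfcSqrt {A : Matrix n n ℂ} (hA : A.PosSemidef) : psqrt A = CFC.sqrt A := by
  rw [psqrt, mfun_eq_cfc hA.1, CFC.sqrt_eq_real_sqrt A hA.nonneg, cfcₙ_eq_cfc]

lemma cfcSqrt_smul {A : Matrix n n ℂ} (hA : 0 ≤ A) {r : ℝ} (hr : 0 ≤ r) :
    CFC.sqrt (r • A) = √r • CFC.sqrt A := by
  refine CFC.sqrt_unique ?_ (smul_nonneg (Real.sqrt_nonneg r) (CFC.sqrt_nonneg A))
  rw [smul_mul_smul, CFC.sqrt_mul_sqrt_self A hA, Real.mul_self_sqrt hr]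

lemma traceNorm_eq (A : Matrix n n ℂ) : traceNorm A = (CFC.sqrt (Aᴴ * A)).trace.re := by
  rw [traceNorm, psqrt_eq_cfcSqrt (posSemidef_conjTranspose_mul_self A)]

lemma traceNorm_smul (A : Matrix n n ℂ) {r : ℝ} (hr : 0 ≤ r) :
    traceNorm (r • A) = r * traceNorm A := by
  have hAA := (posSemidef_conjTranspose_mul_self A).nonneg
  have : (r • A)ᴴ * (r • A) = (r * r) • (Aᴴ * A) := by
    rw [conjTranspose_smul, smul_mul_smul]; simp
  rw [traceNorm_eq, traceNorm_eq, this, cfcSqrt_smul hAA (mul_self_nonneg r),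
    Real.sqrt_mul_self hr, trace_smul]
  simp

lemma fid_smul_right (ρ : Matrix n n ℂ) {σ : Matrix n n ℂ} (hσ : σ.PosSemidef) {r : ℝ}
    (hr : 0 ≤ r) :
    fid ρ (r • σ) = √r * fid ρ σ := by
  rw [fid, fid, psqrt_eq_cfcSqrt (hσ.smul hr), psqrt_eq_cfcSqrt hσ, cfcSqrt_smul hσ.nonneg hr,
    mul_smul_comm, traceNorm_smul _ (Real.sqrt_nonneg r)]

lemma cfcSqrt_mul_eq_zero {A X : Matrix n n ℂ} (hA : A.PosSemidef) (h : A * X = 0) :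
    CFC.sqrt A * X = 0 := by
  rw [← conjTranspose_mul_self_eq_zero, conjTranspose_mul,
    (CFC.sqrt_nonneg A).posSemidef.isHermitian.eq, mul_assoc, ← mul_assoc (CFC.sqrt A),
    CFC.sqrt_mul_sqrt_self A hA.nonneg, h, mul_zero]

lemma fid_compression {ρ P : Matrix n n ℂ} (hρ : ρ.PosSemidef) (hP : Pᴴ = P)
    (hP2 : P * P = P) :
    fid ρ (P * ρ * P) = (P * ρ).trace.re := by
  set σ := P * ρ * P
  have hσ : σ.PosSemidef := by simpa [hP] using hρ.mul_mul_conjTranspose_same P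
  set Q := CFC.sqrt σ
  have hQ : Qᴴ = Q := (CFC.sqrt_nonneg σ).posSemidef.isHermitian.eq
  have hQP : Q * P = Q := by
    have : σ * (1 - P) = 0 := by
      rw [Matrix.mul_sub, Matrix.mul_one, mul_assoc _ P P, hP2, sub_self]
    simpa [Matrix.mul_sub, sub_eq_zero, eq_comm] using cfcSqrt_mul_eq_zero hσ this
  have hPQ : P * Q = Q := by simpa [hP, hQ] using congrArg conjTranspose hQP
  have hsq : (CFC.sqrt ρ * Q)ᴴ * (CFC.sqrt ρ * Q) = σ * σ := calc
    _ = Q * (CFC.sqrt ρ * CFC.sqrt ρ) * Q := by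
      rw [conjTranspose_mul, hQ, (CFC.sqrt_nonneg ρ).posSemidef.isHermitian.eq]; noncomm_ring
    _ = (Q * P) * ρ * (P * Q) := by rw [CFC.sqrt_mul_sqrt_self ρ hρ.nonneg, hQP, hPQ]
    _ = Q * σ * Q := by simp only [σ, mul_assoc]
    _ = σ * σ := by rw [← CFC.sqrt_mul_sqrt_self σ hσ.nonneg]; simp only [Q, mul_assoc]
  rw [fid, psqrt_eq_cfcSqrt hρ, psqrt_eq_cfcSqrt hσ, traceNorm_eq, hsq,
    CFC.sqrt_mul_self σ hσ.nonneg, trace_mul_cycle, hP2]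

end

theorem stmt2_general {n : Type*} [Fintype n] [DecidableEq n]
    (ρ P : Matrix n n ℂ) (hρ : ρ.PosSemidef)
    (hP : Pᴴ = P) (hP2 : P * P = P)
    (hpos : 0 < ((P * ρ).trace).re) :
    Real.sqrt (((P * ρ).trace).re) ≤
      fid ρ ((((P * ρ).trace).re)⁻¹ • (P * ρ * P)) := by
  have hPρP : (P * ρ * P).PosSemidef := by simpa [hP] using hρ.mul_mul_conjTranspose_same P
  rw [fid_smul_right ρ hPρP (inv_nonneg.2 hpos.le), fid_compression hρ hP hP2, Real.sqrt_inv,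
    inv_mul_eq_div, Real.div_sqrt]

/-- Gentle measurement lemma: for a state ρ and projection P with
`Tr(Pρ) > 0`, we have `F(ρ, PρP/Tr(Pρ)) ≥ √(Tr(Pρ))`. -/
theorem stmt2 {n : Type*} [Fintype n] [DecidableEq n]
    (ρ P : Matrix n n ℂ) (hρ : ρ.PosSemidef) (hρ1 : ρ.trace = 1)
    (hP : Pᴴ = P) (hP2 : P * P = P)
    (hpos : 0 < ((P * ρ).trace).re) :
    Real.sqrt (((P * ρ).trace).re) ≤
      fid ρ ((((P * ρ).trace).re)⁻¹ • (P * ρ * P)) :=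
  stmt2_general ρ P hρ hP hP2 hpos
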